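/- Let (Ω, 𝔉, P) be a probability space admitting a countable measurable partition {A_n : n = 1, 2, 3, …} of Ω with P(A_n) > 0 for every n. Set M = span_{L⁰}{Ĩ_{A_n} : n ∈ ℕ} ⊆ L⁰ = L⁰(𝔉,ℝ), U_ε = M + B_ε for ε ∈ L⁰₊₊, and let 𝒯 be the topology on L⁰ in which V is open iff for every y ∈ V there is ε ∈ L⁰₊₊ with y + U_ε ⊆ V. Then 𝒯 is not induced by any family of L⁰-seminorms on L⁰. -/

import Mathlib

/-!
By the triangle inequality, for every `L⁰`-seminorm `p` of an inducing family the sets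
`{u | ¬ f ≤ p u}` are open. In `𝒯` every open set around `0` contains `M`, so `p` vanishes on
each `Ĩ_{A_n}`, and then on all of `L⁰` because the `A_n` partition `Ω`; the seminorm topology
would thus be indiscrete. But `M + {b : |b| < 1 a.e.}` is `𝒯`-open and misses `1`: an element
of `M` vanishes on all but finitely many `A_n`, and each `A_n` has positive measure.
-/

noncomputable section

open MeasureTheory Set Pointwise Filter Topology

namespace PaperL0

variable {Ω : Type*} [MeasurableSpace Ω]

instance commRingL0 (μ : Measure Ω) : CommRing (Ω →ₘ[μ] ℝ) :=
  { (inferInstance : AddCommGroup (Ω →ₘ[μ] ℝ)),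
    (inferInstance : CommMonoid (Ω →ₘ[μ] ℝ)) with
    left_distrib := fun f g h => MeasureTheory.AEEqFun.toGerm_injective <| by
      simp [MeasureTheory.AEEqFun.mul_toGerm, MeasureTheory.AEEqFun.add_toGerm, mul_add]
    right_distrib := fun f g h => MeasureTheory.AEEqFun.toGerm_injective <| by
      simp [MeasureTheory.AEEqFun.mul_toGerm, MeasureTheory.AEEqFun.add_toGerm, add_mul]
    zero_mul := fun f => MeasureTheory.AEEqFun.toGerm_injective <| by
      simp [MeasureTheory.AEEqFun.mul_toGerm, MeasureTheory.AEEqFun.zero_toGerm]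
    mul_zero := fun f => MeasureTheory.AEEqFun.toGerm_injective <| by
      simp [MeasureTheory.AEEqFun.mul_toGerm, MeasureTheory.AEEqFun.zero_toGerm] }

variable (μ : Measure Ω)

/-- `L⁰₊`, the set of nonnegative elements of `L⁰`. -/
def Lpos : Set (Ω →ₘ[μ] ℝ) := {ξ | 0 ≤ ξ}

/-- `L⁰₊₊`, the set of elements of `L⁰` which are `> 0` a.e. on `Ω`. -/
def Lspos : Set (Ω →ₘ[μ] ℝ) := {ξ | ∀ᵐ ω ∂μ, 0 < ξ ω}

/-- The absolute value `|ξ|` of an element of `L⁰`. -/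
def aabs {μ : Measure Ω} (ξ : Ω →ₘ[μ] ℝ) : Ω →ₘ[μ] ℝ := ξ ⊔ -ξ

/-- `B_ε = {ξ ∈ L⁰ : |ξ| ≤ ε}`. -/
def ball (ε : Ω →ₘ[μ] ℝ) : Set (Ω →ₘ[μ] ℝ) := {ξ | aabs ξ ≤ ε}

open Classical in
/-- `Ĩ_A`, the equivalence class of the indicator function of a (measurable) set `A`. -/
def ind (A : Set Ω) : Ω →ₘ[μ] ℝ :=
  if h : MeasurableSet A then
    AEEqFun.mk (A.indicator fun _ => (1 : ℝ))
      ((measurable_const.indicator h).aestronglyMeasurable)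
  else 0

/-- A countable measurable partition of `Ω`. -/
def IsMeasPartition (A : ℕ → Set Ω) : Prop :=
  (∀ n, MeasurableSet (A n)) ∧ Pairwise (Function.onFun Disjoint A) ∧ (⋃ n, A n) = Set.univ

variable {E : Type*} [AddCommGroup E] [Module (Ω →ₘ[μ] ℝ) E]

/-- `L⁰`-convexity of a subset of an `L⁰`-module. -/
def IsL0Convex (U : Set E) : Prop :=
  ∀ x ∈ U, ∀ y ∈ U, ∀ ξ : Ω →ₘ[μ] ℝ, 0 ≤ ξ → ξ ≤ 1 → ξ • x + (1 - ξ) • y ∈ U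

/-- `L⁰`-absorbency of a subset of an `L⁰`-module. -/
def IsL0Absorbent (U : Set E) : Prop := ∀ x : E, ∃ ξ ∈ Lspos μ, x ∈ ξ • U

/-- `L⁰`-balancedness of a subset of an `L⁰`-module. -/
def IsL0Balanced (U : Set E) : Prop :=
  ∀ x ∈ U, ∀ ξ : Ω →ₘ[μ] ℝ, aabs ξ ≤ 1 → ξ • x ∈ U

/-- An `L⁰`-seminorm on an `L⁰`-module. -/
structure IsL0Seminorm (p : E → Ω →ₘ[μ] ℝ) : Prop where
  nonneg : ∀ x, 0 ≤ p x
  homog : ∀ (ξ : Ω →ₘ[μ] ℝ) (x : E), p (ξ • x) = aabs ξ * p x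
  triangle : ∀ x y, p (x + y) ≤ p x + p y

/-- The countable concatenation property for a subset of an `L⁰`-module. -/
def HasCCP (G : Set E) : Prop :=
  ∀ x : ℕ → E, (∀ n, x n ∈ G) → ∀ A : ℕ → Set Ω, IsMeasPartition A →
    (∃ y : E, ∀ n, ind μ (A n) • y = ind μ (A n) • x n) ∧
      ∀ y : E, (∀ n, ind μ (A n) • y = ind μ (A n) • x n) → y ∈ G

/-- The relative countable concatenation property for a subset of an `L⁰`-module. -/
def HasRelCCP (G : Set E) : Prop :=
  ∀ x : ℕ → E, (∀ n, x n ∈ G) → ∀ A : ℕ → Set Ω, IsMeasPartition A →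
    ∀ y : E, (∀ n, ind μ (A n) • y = ind μ (A n) • x n) → y ∈ G

/-- A `P`-atom of a measure. -/
def IsPAtom (A : Set Ω) : Prop :=
  MeasurableSet A ∧ 0 < μ A ∧ ∀ B, MeasurableSet B → B ⊆ A → μ B = 0 ∨ μ B = μ A

end PaperL0

open PaperL0

namespace PaperL0

variable {Ω : Type*} [MeasurableSpace Ω] {μ : Measure Ω}

lemma coeFn_aabs (ξ : Ω →ₘ[μ] ℝ) : ⇑(aabs ξ) =ᵐ[μ] fun ω => |ξ ω| := by
  filter_upwards [AEEqFun.coeFn_sup ξ (-ξ), AEEqFun.coeFn_neg ξ] with ω hsup hneg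
  rw [aabs, hsup, hneg]
  rfl

instance : AddLeftMono (Ω →ₘ[μ] ℝ) where
  elim h f g (hfg : f ≤ g) := show h + f ≤ h + g by
    rw [← AEEqFun.coeFn_le] at hfg ⊢
    filter_upwards [hfg, AEEqFun.coeFn_add h f, AEEqFun.coeFn_add h g] with ω hω hf hg
    rw [hf, hg, Pi.add_apply, Pi.add_apply]
    exact add_le_add_right hω _

lemma coeFn_ind {A : Set Ω} (hA : MeasurableSet A) :
    ⇑(ind μ A) =ᵐ[μ] A.indicator fun _ => (1 : ℝ) := by
  rw [ind, dif_pos hA]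
  exact AEEqFun.coeFn_mk _ _

lemma aabs_zero : aabs (0 : Ω →ₘ[μ] ℝ) = 0 := by
  simp [aabs]

lemma aabs_ind {A : Set Ω} (hA : MeasurableSet A) : aabs (ind μ A) = ind μ A := by
  apply AEEqFun.ext
  filter_upwards [coeFn_aabs (ind μ A), coeFn_ind (μ := μ) hA] with ω habs hind
  rw [habs, hind]
  exact abs_of_nonneg (Set.indicator_nonneg (fun _ _ => zero_le_one) ω)

lemma const_mem_Lspos {δ : ℝ} (hδ : 0 < δ) : AEEqFun.const Ω δ ∈ Lspos μ := by
  filter_upwards [AEEqFun.coeFn_const (μ := μ) Ω δ] with ω hω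
  rwa [hω]

lemma nonneg_of_mem_Lspos {ε : Ω →ₘ[μ] ℝ} (hε : ε ∈ Lspos μ) : 0 ≤ ε := by
  rw [← AEEqFun.coeFn_le]
  filter_upwards [hε, AEEqFun.coeFn_zero (β := ℝ) (μ := μ)] with ω hpos hzero
  rw [hzero]
  exact hpos.le

lemma exists_pos_not_le_add_const {f g : Ω →ₘ[μ] ℝ} (h : ¬ f ≤ g) :
    ∃ δ : ℝ, 0 < δ ∧ ¬ f ≤ g + AEEqFun.const Ω δ := by
  by_contra! H
  apply h
  have hae : ∀ᵐ ω ∂μ, ∀ k : ℕ, f ω ≤ g ω + 1 / (k + 1) := by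
    rw [ae_all_iff]
    intro k
    filter_upwards [AEEqFun.coeFn_le.2 (H _ Nat.one_div_pos_of_nat),
      AEEqFun.coeFn_add g (AEEqFun.const Ω (1 / (k + 1 : ℝ))),
      AEEqFun.coeFn_const (μ := μ) Ω (1 / (k + 1 : ℝ))] with ω hle hadd hconst
    rwa [hadd, Pi.add_apply, hconst, Function.const_apply] at hle
  rw [← AEEqFun.coeFn_le]
  filter_upwards [hae] with ω hω
  refine le_of_forall_pos_le_add fun ε hε => ?_
  obtain ⟨k, hk⟩ := exists_nat_one_div_lt hε
  linarith [hω k]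

lemma ae_eq_of_ind_mul_eq {A : Set Ω} (hA : MeasurableSet A) {f g : Ω →ₘ[μ] ℝ}
    (h : ind μ A * f = ind μ A * g) : ∀ᵐ ω ∂μ, ω ∈ A → f ω = g ω := by
  filter_upwards [AEEqFun.coeFn_mul (ind μ A) f, AEEqFun.coeFn_mul (ind μ A) g,
    coeFn_ind (μ := μ) hA, AEEqFun.ext_iff.1 h] with ω hf hg hind heq hω
  rw [hf, hg, Pi.mul_apply, Pi.mul_apply, hind, Set.indicator_of_mem hω] at heq
  simpa using heq

lemma ind_mul_ind_of_disjoint {A B : Set Ω} (hA : MeasurableSet A) (hB : MeasurableSet B)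
    (h : Disjoint A B) : ind μ A * ind μ B = 0 := by
  apply AEEqFun.ext
  filter_upwards [AEEqFun.coeFn_mul (ind μ A) (ind μ B), coeFn_ind (μ := μ) hA,
    coeFn_ind (μ := μ) hB, AEEqFun.coeFn_zero (β := ℝ) (μ := μ)] with ω hmul hindA hindB hzero
  rw [hmul, Pi.mul_apply, hindA, hindB, hzero]
  by_cases hωA : ω ∈ A
  · simp [hωA, Set.disjoint_left.mp h hωA]
  · simp [hωA]

lemma eq_zero_of_forall_ind_mul_eq_zero {A : ℕ → Set Ω} (hA : IsMeasPartition A)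
    {ξ : Ω →ₘ[μ] ℝ} (h : ∀ n, ind μ (A n) * ξ = 0) : ξ = 0 := by
  have hae : ∀ᵐ ω ∂μ, ∀ n, ω ∈ A n → ξ ω = (0 : Ω →ₘ[μ] ℝ) ω := ae_all_iff.2 fun n =>
    ae_eq_of_ind_mul_eq (hA.1 n) ((h n).trans (mul_zero _).symm)
  apply AEEqFun.ext
  filter_upwards [hae] with ω hω
  obtain ⟨n, hn⟩ := Set.mem_iUnion.1 (hA.2.2.symm ▸ Set.mem_univ ω)
  exact hω n hn

lemma eventually_ind_mul_eq_zero_of_mem_span {A : ℕ → Set Ω} (hA : IsMeasPartition A)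
    {m : Ω →ₘ[μ] ℝ} (hm : m ∈ Submodule.span (Ω →ₘ[μ] ℝ) (Set.range fun n => ind μ (A n))) :
    ∀ᶠ k in atTop, ind μ (A k) * m = 0 := by
  induction hm using Submodule.span_induction with
  | mem x hx =>
    obtain ⟨n, rfl⟩ := hx
    filter_upwards [eventually_ne_atTop n] with k hk
    exact ind_mul_ind_of_disjoint (hA.1 k) (hA.1 n) (hA.2.1 hk)
  | zero => exact Eventually.of_forall fun k => mul_zero _
  | add x y _ _ hx hy =>
    filter_upwards [hx, hy] with k hxk hyk
    rw [mul_add, hxk, hyk, add_zero]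
  | smul a x _ hx =>
    filter_upwards [hx] with k hxk
    rw [smul_eq_mul, mul_left_comm, hxk, mul_zero]

section SeminormTopology

variable {E : Type*} [AddCommGroup E]

variable (μ) in
def IsSeminormTopology (T : TopologicalSpace E) (Ps : Set (E → Ω →ₘ[μ] ℝ)) : Prop :=
  ∀ V : Set E, IsOpen[T] V ↔
    ∀ y ∈ V, ∃ Qs : Set (E → Ω →ₘ[μ] ℝ), Qs.Finite ∧ Qs ⊆ Ps ∧
      ∃ ε ∈ Lspos μ, ∀ u, (∀ p ∈ Qs, p u ≤ ε) → y + u ∈ V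

variable {T : TopologicalSpace E} {Ps : Set (E → Ω →ₘ[μ] ℝ)}

lemma IsSeminormTopology.eq_univ_of_isOpen (hT : IsSeminormTopology μ T Ps)
    (hPs : ∀ p ∈ Ps, ∀ x, p x = 0) {V : Set E} (hV : IsOpen[T] V) (h0 : (0 : E) ∈ V) :
    V = Set.univ := by
  obtain ⟨Qs, -, hQs, ε, hε, hball⟩ := (hT V).1 hV 0 h0
  refine Set.eq_univ_of_forall fun x => ?_
  simpa using hball x fun q hq => (hPs q (hQs hq) x).symm ▸ nonneg_of_mem_Lspos hε

variable [Module (Ω →ₘ[μ] ℝ) E] {p : E → Ω →ₘ[μ] ℝ}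

lemma IsL0Seminorm.map_zero (hp : IsL0Seminorm μ p) : p 0 = 0 := by
  simpa [aabs_zero] using hp.homog 0 0

lemma IsSeminormTopology.isOpen_setOf_not_le (hT : IsSeminormTopology μ T Ps) (hPs : p ∈ Ps)
    (hp : IsL0Seminorm μ p) (f : Ω →ₘ[μ] ℝ) : IsOpen[T] {u | ¬ f ≤ p u} := by
  refine (hT _).2 fun y hy => ?_
  obtain ⟨δ, hδ, hnot⟩ := exists_pos_not_le_add_const hy
  refine ⟨{p}, Set.finite_singleton p, Set.singleton_subset_iff.2 hPs,
    AEEqFun.const Ω δ, const_mem_Lspos hδ, fun u hu hle => hnot ?_⟩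
  calc f ≤ p (y + u) := hle
    _ ≤ p y + p u := hp.triangle y u
    _ ≤ p y + AEEqFun.const Ω δ := add_le_add_right (hu p rfl) _

lemma IsSeminormTopology.eq_zero_of_forall_isOpen (hT : IsSeminormTopology μ T Ps)
    (hPs : p ∈ Ps) (hp : IsL0Seminorm μ p) {x : E}
    (hx : ∀ V, IsOpen[T] V → 0 ∈ V → x ∈ V) : p x = 0 := by
  by_contra hne
  have h0 : ¬ p x ≤ p 0 := by
    rw [hp.map_zero]
    exact fun hle => hne (le_antisymm hle (hp.nonneg x))
  exact hx _ (hT.isOpen_setOf_not_le hPs hp (p x)) h0 le_rfl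

end SeminormTopology

lemma IsL0Seminorm.eq_zero_of_map_ind_eq_zero {p : (Ω →ₘ[μ] ℝ) → Ω →ₘ[μ] ℝ}
    (hp : IsL0Seminorm μ p) {A : ℕ → Set Ω} (hA : IsMeasPartition A)
    (hind : ∀ n, p (ind μ (A n)) = 0) (x : Ω →ₘ[μ] ℝ) : p x = 0 := by
  refine eq_zero_of_forall_ind_mul_eq_zero hA fun n => ?_
  calc ind μ (A n) * p x = p (ind μ (A n) • x) := by rw [hp.homog, aabs_ind (hA.1 n)]
    _ = p (x • ind μ (A n)) := by rw [smul_eq_mul, smul_eq_mul, mul_comm]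
    _ = 0 := by rw [hp.homog, hind n, mul_zero]

section AddBallTopology

variable (μ) in
def IsAddBallTopology (T : TopologicalSpace (Ω →ₘ[μ] ℝ))
    (M : Submodule (Ω →ₘ[μ] ℝ) (Ω →ₘ[μ] ℝ)) : Prop :=
  ∀ V : Set (Ω →ₘ[μ] ℝ), IsOpen[T] V ↔
    ∀ y ∈ V, ∃ ε ∈ Lspos μ, ∀ u ∈ (M : Set (Ω →ₘ[μ] ℝ)) + ball μ ε, y + u ∈ V

variable {T : TopologicalSpace (Ω →ₘ[μ] ℝ)} {M : Submodule (Ω →ₘ[μ] ℝ) (Ω →ₘ[μ] ℝ)}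

lemma IsAddBallTopology.subset_of_isOpen_of_zero_mem (hT : IsAddBallTopology μ T M)
    {V : Set (Ω →ₘ[μ] ℝ)} (hV : IsOpen[T] V) (h0 : 0 ∈ V) :
    (M : Set (Ω →ₘ[μ] ℝ)) ⊆ V := by
  obtain ⟨ε, hε, hball⟩ := (hT V).1 hV 0 h0
  intro m hm
  have hm' : m ∈ (M : Set (Ω →ₘ[μ] ℝ)) + ball μ ε :=
    ⟨m, hm, 0, by simpa [ball, aabs_zero] using nonneg_of_mem_Lspos hε, add_zero m⟩
  simpa using hball m hm'

lemma IsAddBallTopology.isOpen_add_setOf_abs_lt_one (hT : IsAddBallTopology μ T M) :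
    IsOpen[T] ((M : Set (Ω →ₘ[μ] ℝ)) + {b | ∀ᵐ ω ∂μ, |b ω| < 1}) := by
  refine (hT _).2 ?_
  rintro _ ⟨m, hm, b, hb, rfl⟩
  have hg : Continuous fun t : ℝ => (1 - |t|) / 2 := by fun_prop
  refine ⟨b.comp _ hg, ?_, ?_⟩
  · change ∀ᵐ ω ∂μ, 0 < (b.comp _ hg) ω
    filter_upwards [AEEqFun.coeFn_comp _ hg b, hb] with ω hcomp hbω
    rw [hcomp, Function.comp_apply]
    linarith
  · rintro _ ⟨m', hm', c, hc, rfl⟩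
    refine ⟨m + m', M.add_mem hm hm', b + c, ?_, add_add_add_comm m m' b c⟩
    filter_upwards [hb, AEEqFun.coeFn_le.2 hc, coeFn_aabs c, AEEqFun.coeFn_comp _ hg b,
      AEEqFun.coeFn_add b c] with ω hbω hcω habs hcomp hadd
    rw [habs, hcomp, Function.comp_apply] at hcω
    rw [hadd, Pi.add_apply]
    linarith [abs_add_le (b ω) (c ω)]

end AddBallTopology

lemma ae_abs_coeFn_zero_lt_one : ∀ᵐ ω ∂μ, |(0 : Ω →ₘ[μ] ℝ) ω| < 1 := by
  filter_upwards [AEEqFun.coeFn_zero (β := ℝ) (μ := μ)] with ω hω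
  simp [hω]

lemma one_notMem_span_ind_add_setOf_abs_lt_one {A : ℕ → Set Ω} (hA : IsMeasPartition A)
    (hApos : ∀ n, 0 < μ (A n)) :
    (1 : Ω →ₘ[μ] ℝ) ∉ ((Submodule.span (Ω →ₘ[μ] ℝ) (Set.range fun n => ind μ (A n)) :
      Set (Ω →ₘ[μ] ℝ)) + {b | ∀ᵐ ω ∂μ, |b ω| < 1}) := by
  rintro ⟨m, hm, b, hb, hsum⟩
  obtain ⟨k, hk⟩ := (eventually_ind_mul_eq_zero_of_mem_span hA hm).exists
  have hbk : ind μ (A k) * b = ind μ (A k) * 1 := by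
    rw [← hsum, mul_add, hk, zero_add]
  have hnull : ∀ᵐ ω ∂μ, ω ∉ A k := by
    filter_upwards [ae_eq_of_ind_mul_eq (hA.1 k) hbk, hb,
      AEEqFun.coeFn_one (β := ℝ) (μ := μ)] with ω heq hbω hone hω
    rw [heq hω, hone] at hbω
    simp at hbω
  exact (hApos k).ne' (measure_eq_zero_iff_ae_notMem.2 hnull)

end PaperL0

theorem statement15_general
    {Ω : Type*} [MeasurableSpace Ω] (P : Measure Ω)
    (A : ℕ → Set Ω) (hA : IsMeasPartition A) (hApos : ∀ n, 0 < P (A n))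
    (T : TopologicalSpace (Ω →ₘ[P] ℝ))
    (hT : ∀ V : Set (Ω →ₘ[P] ℝ), IsOpen[T] V ↔ ∀ y ∈ V, ∃ ε ∈ Lspos P,
      ∀ u ∈ ((Submodule.span (Ω →ₘ[P] ℝ) (Set.range fun n => ind P (A n)) :
          Submodule (Ω →ₘ[P] ℝ) (Ω →ₘ[P] ℝ)) : Set (Ω →ₘ[P] ℝ)) + ball P ε, y + u ∈ V) :
    ¬ ∃ Ps : Set ((Ω →ₘ[P] ℝ) → Ω →ₘ[P] ℝ), (∀ p ∈ Ps, IsL0Seminorm P p) ∧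
      ∀ V : Set (Ω →ₘ[P] ℝ), IsOpen[T] V ↔
        ∀ y ∈ V, ∃ Qs : Set ((Ω →ₘ[P] ℝ) → Ω →ₘ[P] ℝ), Qs.Finite ∧ Qs ⊆ Ps ∧
          ∃ ε ∈ Lspos P, ∀ u, (∀ p ∈ Qs, p u ≤ ε) → y + u ∈ V := by
  rintro ⟨Ps, hPs, hPsT : IsSeminormTopology P T Ps⟩
  have hT : IsAddBallTopology P T _ := hT
  have hind : ∀ p ∈ Ps, ∀ n, p (ind P (A n)) = 0 := fun p hp n =>
    hPsT.eq_zero_of_forall_isOpen hp (hPs p hp) fun _ hV h0 =>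
      hT.subset_of_isOpen_of_zero_mem hV h0 (Submodule.subset_span ⟨n, rfl⟩)
  have hzero : ∀ p ∈ Ps, ∀ x, p x = 0 := fun p hp =>
    (hPs p hp).eq_zero_of_map_ind_eq_zero hA (hind p hp)
  have huniv := hPsT.eq_univ_of_isOpen hzero hT.isOpen_add_setOf_abs_lt_one
    ⟨0, Submodule.zero_mem _, 0, ae_abs_coeFn_zero_lt_one, add_zero 0⟩
  exact one_notMem_span_ind_add_setOf_abs_lt_one hA hApos (huniv ▸ Set.mem_univ 1)

/-- Remark 3.4: for any probability space admitting a countable measurable partition with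
pieces of positive probability, the locally L⁰-convex topology on L⁰ with neighborhood base
{M + B_ε : ε ∈ L⁰₊₊}, where M = span_{L⁰}{Ĩ_{A_n}}, is not induced by any family of
L⁰-seminorms. -/
theorem statement15
    {Ω : Type*} [MeasurableSpace Ω] (P : Measure Ω) [IsProbabilityMeasure P]
    (A : ℕ → Set Ω) (hA : IsMeasPartition A) (hApos : ∀ n, 0 < P (A n))
    (T : TopologicalSpace (Ω →ₘ[P] ℝ))
    (hT : ∀ V : Set (Ω →ₘ[P] ℝ), IsOpen[T] V ↔ ∀ y ∈ V, ∃ ε ∈ Lspos P,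
      ∀ u ∈ ((Submodule.span (Ω →ₘ[P] ℝ) (Set.range fun n => ind P (A n)) :
          Submodule (Ω →ₘ[P] ℝ) (Ω →ₘ[P] ℝ)) : Set (Ω →ₘ[P] ℝ)) + ball P ε, y + u ∈ V) :
    ¬ ∃ Ps : Set ((Ω →ₘ[P] ℝ) → Ω →ₘ[P] ℝ), (∀ p ∈ Ps, IsL0Seminorm P p) ∧
      ∀ V : Set (Ω →ₘ[P] ℝ), IsOpen[T] V ↔
        ∀ y ∈ V, ∃ Qs : Set ((Ω →ₘ[P] ℝ) → Ω →ₘ[P] ℝ), Qs.Finite ∧ Qs ⊆ Ps ∧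
          ∃ ε ∈ Lspos P, ∀ u, (∀ p ∈ Qs, p u ≤ ε) → y + u ∈ V :=
  statement15_general P A hA hApos T hT
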